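/- arXiv:1009.3728 — 2 statements merged into one kernel-verified Lean document; each statement's English description precedes it below -/
import Mathlib

section
/- If f(X) is a nonzero binary polynomial of degree n, then there exists a nonconstant g ∈ F_2[X] with deg(g) ≤ ⌈log_2(n+2)⌉ that is coprime to f. -/
open Polynomial

theorem stmt_4 (f : Polynomial (ZMod 2)) (hf : f ≠ 0) (n : ℕ) (hn : f.natDegree = n) :
    ∃ g : Polynomial (ZMod 2), 0 < g.natDegree ∧ g.natDegree ≤ Nat.clog 2 (n + 2) ∧
      IsCoprime g f := by
  set d := Nat.clog 2 (n + 2) with hd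
  have hd0 : d ≠ 0 := by
    have : 0 < Nat.clog 2 (n + 2) := Nat.clog_pos (by norm_num) (by omega)
    omega
  let F := GaloisField 2 d
  have : Fintype F := Fintype.ofFinite F
  have hcard : Fintype.card F = 2 ^ d := by
    rw [← Nat.card_eq_fintype_card]; exact GaloisField.card 2 d hd0
  -- f mapped to F is nonzero with natDegree n < card F
  have hinj : Function.Injective (algebraMap (ZMod 2) F) := (algebraMap (ZMod 2) F).injective
  have hmapne : f.map (algebraMap (ZMod 2) F) ≠ 0 := by
    simpa [Polynomial.map_eq_zero_iff hinj] using hf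
  have hdeg : (f.map (algebraMap (ZMod 2) F)).natDegree = n := by
    rw [Polynomial.natDegree_map_eq_of_injective hinj, hn]
  have hlt : n < 2 ^ d := by
    have := Nat.le_pow_clog (b := 2) (by norm_num) (n + 2)
    rw [hd]; omega
  obtain ⟨a, ha⟩ := (f.map (algebraMap (ZMod 2) F)).exists_eval_ne_zero_of_natDegree_lt_card
    hmapne (by rw [hdeg, Cardinal.mk_fintype, hcard]; exact_mod_cast hlt)
  have haf : Polynomial.aeval a f ≠ 0 := by
    rwa [Polynomial.aeval_def, ← Polynomial.eval_map]
  have hint : IsIntegral (ZMod 2) a := Algebra.IsIntegral.isIntegral a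
  refine ⟨minpoly (ZMod 2) a, ?_, ?_, ?_⟩
  · exact (minpoly.irreducible hint).natDegree_pos
  · have := minpoly.natDegree_le (A := ZMod 2) a
    rwa [GaloisField.finrank 2 hd0] at this
  · rcases (minpoly.irreducible hint).isCoprime_or_dvd f with h | h
    · exact h
    · exact absurd (Polynomial.aeval_eq_zero_of_dvd_aeval_eq_zero h (minpoly.aeval _ _)) haf
end

section
/- For a positive integer n ≥ 2, the function f(m) = C(n, m) · m^3 on integers 0 ≤ m ≤ n attains its maximum at m = ⌈n/2⌉ + 1; for n = 1 it is maximized at m = 1. -/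
private lemma f_succ (n m : ℕ) :
    n.choose (m+1) * (m+1)^3 = n.choose m * ((n-m) * (m+1)^2) := by
  have h1 : n.choose (m+1) * (m+1) = n.choose m * (n - m) := Nat.choose_succ_right_eq n m
  calc n.choose (m+1) * (m+1)^3 = (n.choose (m+1) * (m+1)) * (m+1)^2 := by ring
    _ = n.choose m * (n-m) * (m+1)^2 := by rw [h1]
    _ = n.choose m * ((n-m) * (m+1)^2) := by ring

private lemma step_up (n m : ℕ) (hn : 2 ≤ n) (h : 2*m ≤ n+1) :
    n.choose m * m^3 ≤ n.choose (m+1) * (m+1)^3 := by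
  rcases Nat.eq_zero_or_pos m with rfl | hm
  · simp
  · rw [f_succ]
    apply Nat.mul_le_mul_left
    obtain ⟨e, rfl⟩ : ∃ e, m = e + 1 := ⟨m - 1, by omega⟩
    have hd1 : 1 ≤ n - (e+1) := by omega
    have hd2 : e ≤ n - (e+1) := by omega
    nlinarith [sq_nonneg e, hd1, hd2]

private lemma step_down (n m : ℕ) (h : n+2 ≤ 2*m) :
    n.choose (m+1) * (m+1)^3 ≤ n.choose m * m^3 := by
  rcases lt_or_ge n (m+1) with hlt | hle
  · rw [Nat.choose_eq_zero_of_lt hlt]; simp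
  · rw [f_succ]
    apply Nat.mul_le_mul_left
    have hd : n - m ≤ m - 2 := by omega
    have hm : 3 ≤ m := by omega
    obtain ⟨e, rfl⟩ : ∃ e, m = e + 3 := ⟨m - 3, by omega⟩
    have : n - (e+3) ≤ e + 1 := by omega
    nlinarith [this]

theorem stmt_5 (n : ℕ) :
    (2 ≤ n → ∀ m ≤ n,
      n.choose m * m ^ 3 ≤ n.choose ((n + 1) / 2 + 1) * ((n + 1) / 2 + 1) ^ 3) ∧
    (n = 1 → ∀ m ≤ n, n.choose m * m ^ 3 ≤ n.choose 1 * 1 ^ 3) := by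
  constructor
  · intro hn m hm
    set k := (n + 1) / 2 + 1 with hk
    have hup : ∀ j, n.choose (k - j) * (k - j)^3 ≤ n.choose k * k^3 := by
      intro j
      induction j with
      | zero => simp
      | succ j ih =>
        rcases le_or_gt k j with hj | hj
        · have : k - (j+1) = 0 := by omega
          rw [this]; simp
        · have h1 : k - (j+1) + 1 = k - j := by omega
          have h2 : 2 * (k - (j+1)) ≤ n + 1 := by omega
          calc n.choose (k - (j+1)) * (k - (j+1))^3
              ≤ n.choose (k - (j+1) + 1) * (k - (j+1) + 1)^3 := step_up n _ hn h2
            _ = n.choose (k - j) * (k - j)^3 := by rw [h1]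
            _ ≤ n.choose k * k^3 := ih
    have hdown : ∀ j, n.choose (k + j) * (k + j)^3 ≤ n.choose k * k^3 := by
      intro j
      induction j with
      | zero => simp
      | succ j ih =>
        have h2 : n + 2 ≤ 2 * (k + j) := by omega
        calc n.choose (k + j + 1) * (k + j + 1)^3
            ≤ n.choose (k + j) * (k + j)^3 := step_down n _ h2
          _ ≤ n.choose k * k^3 := ih
    rcases le_or_gt m k with h | h
    · have := hup (k - m)
      rwa [show k - (k - m) = m by omega] at this
    · have := hdown (m - k)
      rwa [show k + (m - k) = m by omega] at this
  · rintro rfl m hm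
    interval_cases m <;> simp
end
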